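/- Let b, c be real numbers with c ≠ 0, and let t₁, t₂ be real numbers with t₁ ≠ ±1, t₂ ≠ ±1, t₁ ≠ ±t₂, and t₁ ≠ 0. Define x(t) = b + 2c·(t²+1)/(t²−1) and D(t) = −(1/c)·(t+1)/(t−1). Suppose P ∈ ℝ satisfies the linear equation ( (x(t₁)−b)/c² + 2·D(t₁) )·P + ( D(t₂) − D(t₁) )/( x(t₂) − x(t₁) ) = 0. Then P · ( −8c·t₁/(t₁²−1)² ) = (t₂+1)/((t₁−1)(t₁+t₂)), where −8c·t₁/(t₁²−1)² is the derivative of t ↦ x(t) at t₁. Moreover the coefficient (x(t₁)−b)/c² + 2·D(t₁) equals −4t₁/(c(t₁²−1)) and hence is nonzero, so P is uniquely determined. -/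

import Mathlib

/-- The spectral-curve change of variable `x(t) = b + 2c·(t²+1)/(t²−1)`. -/
noncomputable def xSpec (b c t : ℝ) : ℝ := b + 2 * c * (t ^ 2 + 1) / (t ^ 2 - 1)

/-- `D(t) = −(1/c)·(t+1)/(t−1)`, the value of `∂F₀₁/∂x` at `x(t)`. -/
noncomputable def DSpec (c t : ℝ) : ℝ := -(1 / c) * ((t + 1) / (t - 1))

/-!
Everything is a rational-function identity in `t₁, t₂`. The coefficient of `P` simplifies to
`−4t₁/(c(t₁²−1))`, which is nonzero away from `t₁ = 0`, and the divided difference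
`(D(t₂) − D(t₁))/(x(t₂) − x(t₁))` simplifies to `−(t₁+1)(t₂+1)/(2c²(t₁+t₂))` after cancelling the
common factor `t₂ − t₁`; solving the linear equation for `P` then leaves a rational identity.
-/

section

variable {b c s t : ℝ}

lemma sq_sub_one_ne_zero (h : t ≠ 1) (h' : t ≠ -1) : t ^ 2 - 1 ≠ 0 :=
  sub_ne_zero.2 (sq_ne_one_iff.2 ⟨h, h'⟩)

lemma xSpec_sub_xSpec (hs : s ≠ 1) (hs' : s ≠ -1) (ht : t ≠ 1) (ht' : t ≠ -1) :
    xSpec b c t - xSpec b c s = 4 * c * ((s - t) * (s + t)) / ((s ^ 2 - 1) * (t ^ 2 - 1)) := by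
  have := sq_sub_one_ne_zero hs hs'
  have := sq_sub_one_ne_zero ht ht'
  unfold xSpec
  field_simp
  ring

lemma DSpec_sub_DSpec (hs : s ≠ 1) (ht : t ≠ 1) :
    DSpec c t - DSpec c s = 2 * (t - s) / (c * ((s - 1) * (t - 1))) := by
  have := sub_ne_zero.2 hs
  have := sub_ne_zero.2 ht
  unfold DSpec
  field_simp
  ring

lemma xSpec_sub_div_sq_add_two_mul_DSpec (b : ℝ) (hc : c ≠ 0) (ht : t ≠ 1) (ht' : t ≠ -1) :
    (xSpec b c t - b) / c ^ 2 + 2 * DSpec c t = -4 * t / (c * (t ^ 2 - 1)) := by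
  have := sq_sub_one_ne_zero ht ht'
  have := sub_ne_zero.2 ht
  unfold xSpec DSpec
  field_simp
  ring

lemma DSpec_divided_difference (hc : c ≠ 0) (hs : s ≠ 1) (hs' : s ≠ -1) (ht : t ≠ 1)
    (ht' : t ≠ -1) (hst : s ≠ t) (hst' : s ≠ -t) :
    (DSpec c t - DSpec c s) / (xSpec b c t - xSpec b c s)
      = -((s + 1) * (t + 1) / (2 * c ^ 2 * (s + t))) := by
  have := sub_ne_zero.2 hs
  have := sub_ne_zero.2 ht
  have := sq_sub_one_ne_zero hs hs'
  have := sq_sub_one_ne_zero ht ht'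
  have := sub_ne_zero.2 hst
  have : s + t ≠ 0 := add_eq_zero_iff_eq_neg.not.2 hst'
  rw [DSpec_sub_DSpec hs ht, xSpec_sub_xSpec hs hs' ht ht']
  field_simp
  ring

end

/-- The `(g,v) = (0,2)` case of the `x`-variable functional equation determines
the initial condition of the differential recursion: if
`((x(t₁)−b)/c² + 2·D(t₁))·P + (D(t₂)−D(t₁))/(x(t₂)−x(t₁)) = 0`, then
`P·(−8ct₁/(t₁²−1)²) = (t₂+1)/((t₁−1)(t₁+t₂))`; moreover the coefficient
`(x(t₁)−b)/c² + 2·D(t₁)` equals `−4t₁/(c(t₁²−1))` and is nonzero, so `P` is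
uniquely determined. -/
theorem bcMotzkin_F02_initial_condition (b c : ℝ) (hc : c ≠ 0) (t₁ t₂ : ℝ)
    (h₁ : t₁ ≠ 1) (h₁' : t₁ ≠ -1) (h₂ : t₂ ≠ 1) (h₂' : t₂ ≠ -1)
    (h₁₂ : t₁ ≠ t₂) (h₁₂' : t₁ ≠ -t₂) (h₀ : t₁ ≠ 0) (P : ℝ)
    (hP : ((xSpec b c t₁ - b) / c ^ 2 + 2 * DSpec c t₁) * P
        + (DSpec c t₂ - DSpec c t₁) / (xSpec b c t₂ - xSpec b c t₁) = 0) :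
    P * (-8 * c * t₁ / (t₁ ^ 2 - 1) ^ 2) = (t₂ + 1) / ((t₁ - 1) * (t₁ + t₂))
    ∧ (xSpec b c t₁ - b) / c ^ 2 + 2 * DSpec c t₁ = -4 * t₁ / (c * (t₁ ^ 2 - 1))
    ∧ (xSpec b c t₁ - b) / c ^ 2 + 2 * DSpec c t₁ ≠ 0 := by
  have hcoeff := xSpec_sub_div_sq_add_two_mul_DSpec b hc h₁ h₁'
  have hcoeff_ne : (xSpec b c t₁ - b) / c ^ 2 + 2 * DSpec c t₁ ≠ 0 := by
    rw [hcoeff]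
    exact div_ne_zero (by simpa using h₀) (mul_ne_zero hc (sq_sub_one_ne_zero h₁ h₁'))
  refine ⟨?_, hcoeff, hcoeff_ne⟩
  have hsolve : P = -((DSpec c t₂ - DSpec c t₁) / (xSpec b c t₂ - xSpec b c t₁))
      / ((xSpec b c t₁ - b) / c ^ 2 + 2 * DSpec c t₁) :=
    (eq_div_iff hcoeff_ne).2 (by linear_combination hP)
  rw [hsolve, hcoeff, DSpec_divided_difference hc h₁ h₁' h₂ h₂' h₁₂ h₁₂']
  have := sub_ne_zero.2 h₁
  have := sq_sub_one_ne_zero h₁ h₁'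
  have : t₁ + t₂ ≠ 0 := add_eq_zero_iff_eq_neg.not.2 h₁₂'
  field_simp
  ring
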